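/- (Proposition 2, full Lagrangian form) Let n be a positive natural number, W > 0, μ ≥ 0, ν ≥ 0, ζ > 0, Rtar and Pmax real, and A : Fin n → ℝ with Aⱼ > 0 for all j. Define the Lagrangian L(P) = Σⱼ [ (1+μ)·W·log(1 + Aⱼ·Pⱼ)/log 2 − (ζ+ν)·Pⱼ ] − μ·Rtar + ν·Pmax on vectors P : Fin n → ℝ. Then the vector P★ with P★ⱼ = max( (1+μ)·W/((ν+ζ)·log 2) − 1/Aⱼ , 0 ) satisfies L(P) ≤ L(P★) for every P with Pⱼ ≥ 0 for all j; that is, P★ solves the dual function maximization g(μ,ν) = max_{P ≥ 0} L(P). -/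
import Mathlib

lemma key_ineq (a b c x : ℝ) (ha : 0 < a) (hb : 0 < b) (hc : 0 < c) (hx : 0 ≤ x) :
    c * Real.log (1 + a * x) - b * x ≤
      c * Real.log (1 + a * max (c / b - 1 / a) 0) - b * max (c / b - 1 / a) 0 := by
  set s := max (c / b - 1 / a) 0 with hs
  have hs0 : 0 ≤ s := le_max_right _ _
  have h1x : 0 < 1 + a * x := by nlinarith
  have h1s : 0 < 1 + a * s := by nlinarith
  have hlog : Real.log (1 + a * x) - Real.log (1 + a * s) ≤ a * (x - s) / (1 + a * s) := by
    have hdiv : 0 < (1 + a * x) / (1 + a * s) := div_pos h1x h1s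
    have h := Real.log_le_sub_one_of_pos hdiv
    rw [Real.log_div (ne_of_gt h1x) (ne_of_gt h1s)] at h
    have : (1 + a * x) / (1 + a * s) - 1 = a * (x - s) / (1 + a * s) := by
      field_simp; ring
    linarith [this ▸ h]
  have hmul : c * (Real.log (1 + a * x) - Real.log (1 + a * s)) ≤
      c * (a * (x - s) / (1 + a * s)) := by
    exact mul_le_mul_of_nonneg_left hlog hc.le
  have hfin : c * (a * (x - s) / (1 + a * s)) ≤ b * (x - s) := by
    rcases le_or_gt (c / b - 1 / a) 0 with h | h
    · have hse : s = 0 := max_eq_right h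
      have hcab : c * a ≤ b := by
        have : c / b ≤ 1 / a := by linarith
        rw [div_le_div_iff₀ hb ha] at this
        linarith
      rw [hse]
      have : c * (a * (x - 0) / (1 + a * 0)) = c * a * x := by ring
      rw [this]
      nlinarith
    · have hse : s = c / b - 1 / a := max_eq_left h.le
      have h1as : 1 + a * s = a * c / b := by
        rw [hse]; field_simp; ring
      rw [h1as]
      have : c * (a * (x - s) / (a * c / b)) = b * (x - s) := by
        rw [hse]; field_simp
      rw [this]
  nlinarith [hmul.trans hfin]

theorem eMBB_lagrangian_optimal (n : ℕ) (hn : 0 < n) (W μ ν ζ Rtar Pmax : ℝ)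
    (hW : 0 < W) (hμ : 0 ≤ μ) (hν : 0 ≤ ν) (hζ : 0 < ζ)
    (A : Fin n → ℝ) (hA : ∀ j, 0 < A j)
    (L : (Fin n → ℝ) → ℝ)
    (hL : L = fun P => (∑ j, ((1 + μ) * W * Real.log (1 + A j * P j) / Real.log 2
        - (ζ + ν) * P j)) - μ * Rtar + ν * Pmax)
    (Pstar : Fin n → ℝ)
    (hPstar : Pstar = fun j => max ((1 + μ) * W / ((ν + ζ) * Real.log 2) - 1 / A j) 0) :
    ∀ P : Fin n → ℝ, (∀ j, 0 ≤ P j) → L P ≤ L Pstar := by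
  intro P hP
  have hlog2 : 0 < Real.log 2 := Real.log_pos one_lt_two
  subst hL hPstar
  simp only
  have hsum : ∀ j : Fin n,
      (1 + μ) * W * Real.log (1 + A j * P j) / Real.log 2 - (ζ + ν) * P j ≤
      (1 + μ) * W * Real.log (1 + A j * max ((1 + μ) * W / ((ν + ζ) * Real.log 2) - 1 / A j) 0) / Real.log 2
        - (ζ + ν) * max ((1 + μ) * W / ((ν + ζ) * Real.log 2) - 1 / A j) 0 := by
    intro j
    have ha := hA j
    have hc : 0 < (1 + μ) * W / Real.log 2 := by positivity
    have hb : 0 < ζ + ν := by linarith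
    have hcb : (1 + μ) * W / Real.log 2 / (ζ + ν) = (1 + μ) * W / ((ν + ζ) * Real.log 2) := by
      field_simp; ring
    have h := key_ineq (A j) (ζ + ν) ((1 + μ) * W / Real.log 2) (P j) ha hb hc (hP j)
    rw [hcb] at h
    calc (1 + μ) * W * Real.log (1 + A j * P j) / Real.log 2 - (ζ + ν) * P j
        = (1 + μ) * W / Real.log 2 * Real.log (1 + A j * P j) - (ζ + ν) * P j := by ring
      _ ≤ _ := h
      _ = _ := by ring
  have := Finset.sum_le_sum (s := Finset.univ) (fun j _ => hsum j)
  linarith
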